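/- arXiv:1706.05289 — 6 statements merged into one kernel-verified Lean document; each statement's English description precedes it below -/
import Mathlib

section
/- For every k ∈ ℕ₀ and every x ∈ ℂ with |x| = 1, |P_k(x)| ≤ 2^{(k+1)/2} and |Q_k(x)| ≤ 2^{(k+1)/2}. -/
/-!
Since `|σ_k x^{2^k}| = 1` on the unit circle, the parallelogram law shows that the step
`(p, q) ↦ (p + σ_k x^{2^k} q, p - σ_k x^{2^k} q)` doubles `|p|² + |q|²`. Hence
`|P_k(x)|² + |Q_k(x)|² = 2^{k+1}`, and each of the two terms is at most `2^{k+1}`.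
-/

open Polynomial

/-- The pair of polynomial sequences `(P_k, Q_k)` defined by `P_0 = Q_0 = X` and
`P_{k+1} = P_k + σ_k x^{2^k} Q_k`, `Q_{k+1} = P_k - σ_k x^{2^k} Q_k`. -/
noncomputable def PQ (σ : ℕ → ℤ) : ℕ → Polynomial ℂ × Polynomial ℂ
  | 0 => (Polynomial.X, Polynomial.X)
  | k + 1 =>
      ((PQ σ k).1 + Polynomial.C ((σ k : ℂ)) * Polynomial.X ^ 2 ^ k * (PQ σ k).2,
       (PQ σ k).1 - Polynomial.C ((σ k : ℂ)) * Polynomial.X ^ 2 ^ k * (PQ σ k).2)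

lemma Complex.norm_add_mul_sq_add_norm_sub_mul_sq {c : ℂ} (hc : ‖c‖ = 1) (p q : ℂ) :
    ‖p + c * q‖ ^ 2 + ‖p - c * q‖ ^ 2 = 2 * (‖p‖ ^ 2 + ‖q‖ ^ 2) := by
  have h := parallelogram_law_with_norm ℝ p (c * q)
  rw [norm_mul, hc, one_mul] at h
  linear_combination h

lemma Real.le_two_rpow_half_of_sq_le {a : ℝ} {n : ℕ} (h : a ^ 2 ≤ 2 ^ n) :
    a ≤ 2 ^ ((n : ℝ) / 2) := by
  rw [div_eq_mul_one_div, Real.rpow_mul zero_le_two, Real.rpow_natCast, ← Real.sqrt_eq_rpow]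
  exact Real.le_sqrt_of_sq_le h

namespace PQ

variable {σ : ℕ → ℤ}

lemma eval_fst_succ (k : ℕ) (x : ℂ) :
    (PQ σ (k + 1)).1.eval x = (PQ σ k).1.eval x + σ k * x ^ 2 ^ k * (PQ σ k).2.eval x := by
  simp [PQ]

lemma eval_snd_succ (k : ℕ) (x : ℂ) :
    (PQ σ (k + 1)).2.eval x = (PQ σ k).1.eval x - σ k * x ^ 2 ^ k * (PQ σ k).2.eval x := by
  simp [PQ]

lemma norm_eval_sq_add (hσ : ∀ k, σ k = 1 ∨ σ k = -1) (k : ℕ) {x : ℂ} (hx : ‖x‖ = 1) :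
    ‖(PQ σ k).1.eval x‖ ^ 2 + ‖(PQ σ k).2.eval x‖ ^ 2 = 2 ^ (k + 1) := by
  induction k with
  | zero => norm_num [PQ, hx]
  | succ k ih =>
    have hc : ‖(σ k : ℂ) * x ^ 2 ^ k‖ = 1 := by
      rcases hσ k with h | h <;> simp [h, hx]
    rw [eval_fst_succ, eval_snd_succ, Complex.norm_add_mul_sq_add_norm_sub_mul_sq hc, ih]
    ring

end PQ

theorem stmt2 (σ : ℕ → ℤ) (hσ : ∀ k, σ k = 1 ∨ σ k = -1) :
    ∀ k : ℕ, ∀ x : ℂ, ‖x‖ = 1 →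
      ‖(PQ σ k).1.eval x‖ ≤ (2 : ℝ) ^ (((k : ℝ) + 1) / 2) ∧
      ‖(PQ σ k).2.eval x‖ ≤ (2 : ℝ) ^ (((k : ℝ) + 1) / 2) := by
  intro k x hx
  have h := PQ.norm_eval_sq_add hσ k hx
  rw [← Nat.cast_succ]
  constructor
  · exact Real.le_two_rpow_half_of_sq_le (h ▸ le_add_of_nonneg_right (sq_nonneg _))
  · exact Real.le_two_rpow_half_of_sq_le (h ▸ le_add_of_nonneg_left (sq_nonneg _))
end

section
/- Write P_k(x) = Σ_{n=1}^{2^k} ε_n x^n and Q_k(x) = Σ_{n=1}^{2^k} γ_n x^n with ε_n, γ_n ∈ {1, −1}. Then for every k ∈ ℕ₀, every m with 1 ≤ m ≤ 2^k, and every x ∈ ℂ with |x| = 1, |Σ_{n=1}^m ε_n x^n| ≤ (2 + √2)·2^{k/2} and |Σ_{n=1}^m γ_n x^n| ≤ (2 + √2)·2^{k/2}. -/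
open Polynomial Finset

/-! On the unit circle the recurrence and the parallelogram law give
`‖P_k(x)‖² + ‖Q_k(x)‖² = 2 (‖P_{k-1}(x)‖² + ‖Q_{k-1}(x)‖²) = 2^{k+1}`, so `‖P_k(x)‖ ≤ √2^{k+1}`.
Induct on `k` with the bound `(2 + √2) √2^k = (2 + √2) 2^{k/2}`. A partial sum of length
`m ≤ 2^k` of `P_{k+1}` or `Q_{k+1}` is one of `P_k`; for `m > 2^k` it is `P_k(x)` plus a
unimodular multiple of a partial sum of `Q_k`, and `√2^{k+1} + (2 + √2) √2^k = (2 + √2) √2^{k+1}`. -/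

section partialSum

variable {R : Type*} [CommSemiring R]

def partialSum (p : R[X]) (m : ℕ) (x : R) : R := ∑ n ∈ Icc 1 m, p.coeff n * x ^ n

@[simp]
lemma partialSum_zero (p : R[X]) (x : R) : partialSum p 0 x = 0 := by
  simp [partialSum]

lemma partialSum_add (p q : R[X]) (m : ℕ) (x : R) :
    partialSum (p + q) m x = partialSum p m x + partialSum q m x := by
  simp only [partialSum, coeff_add, add_mul, sum_add_distrib]

lemma partialSum_C_mul (a : R) (p : R[X]) (m : ℕ) (x : R) :
    partialSum (C a * p) m x = a * partialSum p m x := by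
  simp only [partialSum, coeff_C_mul, mul_sum, mul_assoc]

lemma partialSum_X_pow_mul {q : R[X]} (hq : q.coeff 0 = 0) (p m : ℕ) (x : R) :
    partialSum (X ^ p * q) m x = x ^ p * partialSum q (m - p) x := by
  have hshift : (Icc 1 (m - p)).map (addLeftEmbedding p) = Icc (p + 1) (p + (m - p)) :=
    map_add_left_Icc _ _ _
  rw [partialSum, partialSum, mul_sum, ← sum_subset (s₁ := Icc (p + 1) (p + (m - p))),
    ← hshift, sum_map]
  · refine sum_congr rfl fun j _ => ?_
    rw [addLeftEmbedding_apply, coeff_X_pow_mul', if_pos (Nat.le_add_right p j),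
      Nat.add_sub_cancel_left, pow_add]
    ring
  · intro n hn; simp only [mem_Icc] at hn ⊢; omega
  · intro n hn hn'
    simp only [mem_Icc] at hn hn'
    rw [coeff_X_pow_mul']
    split_ifs with h
    · rw [show n - p = 0 by omega, hq, zero_mul]
    · rw [zero_mul]

lemma partialSum_eq_eval {p : R[X]} (hp : p.coeff 0 = 0) {m : ℕ} (hm : p.natDegree ≤ m)
    (x : R) : partialSum p m x = p.eval x := by
  rw [eval_eq_sum_range' (Nat.lt_succ_of_le hm), range_eq_Ico,
    sum_eq_sum_Ico_succ_bot (Nat.succ_pos m), hp, zero_mul, zero_add]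
  rfl

end partialSum

lemma partialSum_sub {R : Type*} [CommRing R] (p q : R[X]) (m : ℕ) (x : R) :
    partialSum (p - q) m x = partialSum p m x - partialSum q m x := by
  simp only [partialSum, coeff_sub, sub_mul, sum_sub_distrib]

lemma norm_intCast_mul_pow_eq_one {s : ℤ} (hs : |s| = 1) {x : ℂ} (hx : ‖x‖ = 1) (p : ℕ) :
    ‖(s : ℂ) * x ^ p‖ = 1 := by
  rw [norm_mul, norm_pow, hx, Complex.norm_intCast, ← Int.cast_abs, hs]
  simp

lemma PQ_coeff_zero (σ : ℕ → ℤ) (k : ℕ) :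
    (PQ σ k).1.coeff 0 = 0 ∧ (PQ σ k).2.coeff 0 = 0 := by
  induction k with
  | zero => simp [PQ]
  | succ k ih =>
    simp only [PQ, coeff_add, coeff_sub, mul_assoc, coeff_C_mul, coeff_X_pow_mul',
      if_neg (Nat.two_pow_pos k).not_ge, ih.1]
    simp

lemma PQ_natDegree_le (σ : ℕ → ℤ) (k : ℕ) :
    (PQ σ k).1.natDegree ≤ 2 ^ k ∧ (PQ σ k).2.natDegree ≤ 2 ^ k := by
  induction k with
  | zero => simp [PQ]
  | succ k ih =>
    have hshift : (C (σ k : ℂ) * X ^ 2 ^ k * (PQ σ k).2).natDegree ≤ 2 ^ (k + 1) := by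
      rw [pow_succ, mul_two]
      exact natDegree_mul_le_of_le ((natDegree_C_mul_le _ _).trans (natDegree_X_pow_le _)) ih.2
    have hfst : (PQ σ k).1.natDegree ≤ 2 ^ (k + 1) :=
      ih.1.trans (Nat.pow_le_pow_right two_pos k.le_succ)
    exact ⟨(natDegree_add_le _ _).trans (max_le hfst hshift),
      (natDegree_sub_le _ _).trans (max_le hfst hshift)⟩

lemma partialSum_PQ_succ (σ : ℕ → ℤ) (k m : ℕ) (x : ℂ) :
    partialSum (PQ σ (k + 1)).1 m x =
        partialSum (PQ σ k).1 m x + σ k * x ^ 2 ^ k * partialSum (PQ σ k).2 (m - 2 ^ k) x ∧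
      partialSum (PQ σ (k + 1)).2 m x =
        partialSum (PQ σ k).1 m x - σ k * x ^ 2 ^ k * partialSum (PQ σ k).2 (m - 2 ^ k) x := by
  have hQ := (PQ_coeff_zero σ k).2
  simp only [PQ, partialSum_add, partialSum_sub, mul_assoc, partialSum_C_mul,
    partialSum_X_pow_mul hQ, and_self]

variable {σ : ℕ → ℤ}

lemma norm_eval_PQ_sq_add (hσ : ∀ k, |σ k| = 1) {x : ℂ} (hx : ‖x‖ = 1) (k : ℕ) :
    ‖(PQ σ k).1.eval x‖ ^ 2 + ‖(PQ σ k).2.eval x‖ ^ 2 = 2 ^ (k + 1) := by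
  induction k with
  | zero => norm_num [PQ, hx]
  | succ k ih =>
    have hrot : ‖(σ k : ℂ) * x ^ 2 ^ k * (PQ σ k).2.eval x‖ = ‖(PQ σ k).2.eval x‖ := by
      rw [norm_mul, norm_intCast_mul_pow_eq_one (hσ k) hx, one_mul]
    have hpar := parallelogram_law_with_norm ℂ ((PQ σ k).1.eval x)
      ((σ k : ℂ) * x ^ 2 ^ k * (PQ σ k).2.eval x)
    simp only [PQ, eval_add, eval_sub, eval_mul, eval_C, eval_pow, eval_X]
    rw [hrot] at hpar
    linear_combination hpar + 2 * ih

lemma norm_eval_PQ_fst_le (hσ : ∀ k, |σ k| = 1) {x : ℂ} (hx : ‖x‖ = 1) (k : ℕ) :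
    ‖(PQ σ k).1.eval x‖ ≤ √2 ^ (k + 1) := by
  have hsq : (√2 ^ (k + 1)) ^ 2 = 2 ^ (k + 1) := by
    rw [← pow_mul, mul_comm, pow_mul, Real.sq_sqrt zero_le_two]
  rw [← pow_le_pow_iff_left₀ (norm_nonneg _) (by positivity) two_ne_zero, hsq,
    ← norm_eval_PQ_sq_add hσ hx k]
  exact le_add_of_nonneg_right (sq_nonneg _)

lemma norm_partialSum_PQ_le (hσ : ∀ k, |σ k| = 1) {x : ℂ} (hx : ‖x‖ = 1) (k : ℕ) :
    ∀ m ≤ 2 ^ k, ‖partialSum (PQ σ k).1 m x‖ ≤ (2 + √2) * √2 ^ k ∧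
      ‖partialSum (PQ σ k).2 m x‖ ≤ (2 + √2) * √2 ^ k := by
  induction k with
  | zero =>
    intro m hm
    interval_cases m <;> simp [partialSum, PQ, hx] <;> linarith [Real.sqrt_nonneg 2]
  | succ k ih =>
    intro m hm
    obtain ⟨hP, hQ⟩ := partialSum_PQ_succ σ k m x
    have hrot := norm_intCast_mul_pow_eq_one (hσ k) hx (2 ^ k)
    rcases le_or_gt m (2 ^ k) with hlow | hhigh
    · -- the tail `partialSum _ (m - 2 ^ k) x` is empty, as `m - 2 ^ k` truncates to `0`
      have hgrow : (2 + √2) * √2 ^ k ≤ (2 + √2) * √2 ^ (k + 1) := by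
        gcongr
        · exact Real.one_le_sqrt.mpr one_le_two
        · exact k.le_succ
      rw [hP, hQ, Nat.sub_eq_zero_of_le hlow, partialSum_zero, mul_zero, add_zero, sub_zero]
      exact ⟨(ih m hlow).1.trans hgrow, (ih m hlow).1.trans hgrow⟩
    · have hfull : partialSum (PQ σ k).1 m x = (PQ σ k).1.eval x :=
        partialSum_eq_eval (PQ_coeff_zero σ k).1 ((PQ_natDegree_le σ k).1.trans hhigh.le) x
      have htail := (ih (m - 2 ^ k) (by rw [pow_succ] at hm; omega)).2
      have hsum : √2 ^ (k + 1) + (2 + √2) * √2 ^ k = (2 + √2) * √2 ^ (k + 1) := by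
        linear_combination (-√2 ^ k) * Real.mul_self_sqrt zero_le_two
      rw [hP, hQ, hfull, ← hsum]
      constructor
      · refine (norm_add_le _ _).trans ?_
        rw [norm_mul, hrot, one_mul]
        exact add_le_add (norm_eval_PQ_fst_le hσ hx k) htail
      · refine (norm_sub_le _ _).trans ?_
        rw [norm_mul, hrot, one_mul]
        exact add_le_add (norm_eval_PQ_fst_le hσ hx k) htail

/-- Partial sums of the coefficient sequences of `P_k` and `Q_k` are bounded by
`(2 + √2) · 2^{k/2}` on the unit circle. -/
theorem stmt3 (σ : ℕ → ℤ) (hσ : ∀ k, σ k = 1 ∨ σ k = -1) :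
    ∀ k : ℕ, ∀ m : ℕ, 1 ≤ m → m ≤ 2 ^ k → ∀ x : ℂ, ‖x‖ = 1 →
      ‖∑ n ∈ Finset.Icc 1 m, (PQ σ k).1.coeff n * x ^ n‖
        ≤ (2 + Real.sqrt 2) * (2 : ℝ) ^ ((k : ℝ) / 2) ∧
      ‖∑ n ∈ Finset.Icc 1 m, (PQ σ k).2.coeff n * x ^ n‖
        ≤ (2 + Real.sqrt 2) * (2 : ℝ) ^ ((k : ℝ) / 2) := by
  intro k m _ hm x hx
  have hσ' : ∀ k, |σ k| = 1 := fun k => by rcases hσ k with h | h <;> simp [h]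
  rw [Real.rpow_div_two_eq_sqrt _ zero_le_two, Real.rpow_natCast]
  exact norm_partialSum_PQ_le hσ' hx k m hm
end

section
/- For every N ≥ 1, |Σ_{n=1}^N ε_n| ≤ 2(1 + √2)·N^{1/2}; consequently (1/N)·Σ_{n=1}^N ε_n → 0 as N → ∞, i.e., the sequence (ε_n) is balanced, whatever the choice of the signs σ_k. -/
open Polynomial Finset Filter

/-!
Write `S_N(p)` for the sum of the coefficients of `X^0, …, X^N` in `p`. Both `P_{k+1}` and
`Q_{k+1}` have the form `P_k + τ X^{2^k} Q_k` with `|τ| = 1`, and `P_k` has degree at most `2^k`.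
Hence `S_N` of either polynomial is `S_N(P_k)` for `N < 2^k`, and `P_k(1) + τ S_m(Q_k)` for
`N = 2^k + m ≤ 2^{k+1}`. The parallelogram law gives `|P_k(1)|² + |Q_k(1)|² = 2^{k+1}`, so
`|P_k(1)| ≤ √(2 · 2^k)`, and induction on `k` bounds `|S_N|` by `(2 + √2)√N` for `P_k` and `Q_k`
simultaneously.
-/

/-- The constant `c = 2 + √2` is the positive root of `c² - 2√2 c - 2 = 0`: after squaring, the
inequality becomes `(c² - 2) a ≥ 2√2 c √(a m)`, which then follows from `m ≤ a`. -/
lemma sqrt_two_mul_add_le {a m : ℝ} (hm : 0 ≤ m) (hma : m ≤ a) :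
    √(2 * a) + (2 + √2) * √m ≤ (2 + √2) * √(a + m) := by
  have hs : √2 ^ 2 = 2 := Real.sq_sqrt zero_le_two
  have ha : √a ^ 2 = a := Real.sq_sqrt (hm.trans hma)
  have hm' : √m ^ 2 = m := Real.sq_sqrt hm
  have ham : √(a + m) ^ 2 = a + m := Real.sq_sqrt (by linarith)
  have hmono : √m ≤ √a := Real.sqrt_le_sqrt hma
  rw [Real.sqrt_mul zero_le_two]
  refine le_of_pow_le_pow_left₀ two_ne_zero (by positivity) ?_
  nlinarith [Real.sqrt_nonneg 2, Real.sqrt_nonneg a, Real.sqrt_nonneg m,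
    mul_nonneg (Real.sqrt_nonneg a) (sub_nonneg.mpr hmono)]

lemma tendsto_one_div_mul_of_norm_le_mul_sqrt {𝕜 : Type*} [RCLike 𝕜] {a : ℕ → 𝕜} {C : ℝ}
    (h : ∀ N : ℕ, 1 ≤ N → ‖a N‖ ≤ C * √N) :
    Tendsto (fun N : ℕ => (1 / (N : 𝕜)) * a N) atTop (nhds 0) := by
  have hC : Tendsto (fun N : ℕ => C / √N) atTop (nhds 0) :=
    tendsto_const_nhds.div_atTop (Real.tendsto_sqrt_atTop.comp tendsto_natCast_atTop_atTop)
  refine squeeze_zero_norm' (eventually_atTop.2 ⟨1, fun N hN => ?_⟩) hC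
  calc ‖1 / (N : 𝕜) * a N‖ = ‖a N‖ / N := by
        rw [norm_mul, norm_div, norm_one, RCLike.norm_natCast, one_div_mul_eq_div]
    _ ≤ C * √N / N := by gcongr; exact h N hN
    _ = C / √N := by rw [mul_div_assoc, Real.sqrt_div_self', mul_one_div]

namespace Polynomial

variable {R : Type*} [Semiring R]

def coeffPartialSum (p : R[X]) (N : ℕ) : R := ∑ n ∈ range (N + 1), p.coeff n

lemma coeffPartialSum_add (p q : R[X]) (N : ℕ) :
    coeffPartialSum (p + q) N = coeffPartialSum p N + coeffPartialSum q N := by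
  simp only [coeffPartialSum, coeff_add, sum_add_distrib]

lemma coeffPartialSum_C_mul_X_pow_mul_of_lt (τ : R) (q : R[X]) {M N : ℕ} (h : N < M) :
    coeffPartialSum (C τ * X ^ M * q) N = 0 := by
  refine sum_eq_zero fun n hn => ?_
  rw [mul_assoc, coeff_C_mul, coeff_X_pow_mul', if_neg (by grind), mul_zero]

lemma coeffPartialSum_C_mul_X_pow_mul_add (τ : R) (q : R[X]) (M m : ℕ) :
    coeffPartialSum (C τ * X ^ M * q) (M + m) = τ * coeffPartialSum q m := by
  rw [coeffPartialSum, coeffPartialSum, add_assoc, sum_range_add, sum_eq_zero fun n hn => ?_,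
    zero_add, mul_sum]
  · refine sum_congr rfl fun j _ => ?_
    rw [mul_assoc, coeff_C_mul, add_comm M, coeff_X_pow_mul]
  · rw [mul_assoc, coeff_C_mul, coeff_X_pow_mul', if_neg (by grind), mul_zero]

lemma coeffPartialSum_eq_eval_one {p : R[X]} {N : ℕ} (h : p.natDegree ≤ N) :
    coeffPartialSum p N = p.eval 1 := by
  simp [coeffPartialSum, eval_eq_sum_range' (Nat.lt_succ_of_le h)]

lemma coeffPartialSum_eq_sum_Icc {p : R[X]} (h : p.coeff 0 = 0) (N : ℕ) :
    coeffPartialSum p N = ∑ n ∈ Icc 1 N, p.coeff n := by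
  rw [coeffPartialSum, range_eq_Ico, sum_eq_sum_Ico_succ_bot N.succ_pos, h, zero_add, zero_add,
    Nat.succ_eq_add_one, Ico_add_one_right_eq_Icc]

lemma natDegree_add_C_mul_X_pow_mul_le {p q : R[X]} (τ : R) {M : ℕ} (hp : p.natDegree ≤ M)
    (hq : q.natDegree ≤ M) : (p + C τ * X ^ M * q).natDegree ≤ 2 * M :=
  natDegree_add_le_of_degree_le (by omega)
    ((natDegree_mul_le_of_le (natDegree_C_mul_X_pow_le τ M) hq).trans (by omega))


lemma norm_coeffPartialSum_add_C_mul_X_pow_mul_le {𝕜 : Type*} [NormedDivisionRing 𝕜]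
    {p q : 𝕜[X]} {τ : 𝕜} (hτ : ‖τ‖ = 1)
    {M : ℕ} (hp : p.natDegree ≤ M) (hp1 : ‖p.eval 1‖ ^ 2 ≤ 2 * M)
    (hpS : ∀ N ≤ M, ‖coeffPartialSum p N‖ ≤ (2 + √2) * √N)
    (hqS : ∀ N ≤ M, ‖coeffPartialSum q N‖ ≤ (2 + √2) * √N) {N : ℕ} (hN : N ≤ 2 * M) :
    ‖coeffPartialSum (p + C τ * X ^ M * q) N‖ ≤ (2 + √2) * √N := by
  rw [coeffPartialSum_add]
  rcases lt_or_ge N M with hNM | hMN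
  · rw [coeffPartialSum_C_mul_X_pow_mul_of_lt _ _ hNM, add_zero]
    exact hpS N hNM.le
  obtain ⟨m, rfl⟩ := Nat.exists_eq_add_of_le hMN
  rw [coeffPartialSum_C_mul_X_pow_mul_add, coeffPartialSum_eq_eval_one (hp.trans le_self_add)]
  calc ‖p.eval 1 + τ * coeffPartialSum q m‖ ≤ ‖p.eval 1‖ + ‖coeffPartialSum q m‖ := by
        simpa only [norm_mul, hτ, one_mul] using norm_add_le (p.eval 1) (τ * coeffPartialSum q m)
    _ ≤ √(2 * M) + (2 + √2) * √m :=
        add_le_add (Real.le_sqrt_of_sq_le hp1) (hqS m (by omega))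
    _ ≤ (2 + √2) * √(M + m) :=
        sqrt_two_mul_add_le m.cast_nonneg (by exact_mod_cast (by omega : m ≤ M))
    _ = (2 + √2) * √(M + m : ℕ) := by push_cast; rfl

end Polynomial

section PQ

variable (σ : ℕ → ℤ)

lemma PQ_snd_succ (k : ℕ) :
    (PQ σ (k + 1)).2 = (PQ σ k).1 + C (-(σ k : ℂ)) * X ^ 2 ^ k * (PQ σ k).2 := by
  rw [PQ, map_neg, neg_mul, neg_mul, ← sub_eq_add_neg]

lemma X_dvd_PQ (k : ℕ) : X ∣ (PQ σ k).1 ∧ X ∣ (PQ σ k).2 := by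
  induction k with
  | zero => exact ⟨dvd_rfl, dvd_rfl⟩
  | succ k ih =>
    exact ⟨dvd_add ih.1 (dvd_mul_of_dvd_right ih.2 _), dvd_sub ih.1 (dvd_mul_of_dvd_right ih.2 _)⟩

lemma natDegree_PQ_le (k : ℕ) : (PQ σ k).1.natDegree ≤ 2 ^ k ∧ (PQ σ k).2.natDegree ≤ 2 ^ k := by
  induction k with
  | zero => simp [PQ]
  | succ k ih =>
    rw [pow_succ', PQ_snd_succ]
    exact ⟨natDegree_add_C_mul_X_pow_mul_le _ ih.1 ih.2, natDegree_add_C_mul_X_pow_mul_le _ ih.1 ih.2⟩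

variable {σ}

lemma norm_eval_one_PQ_sq (hσ : ∀ k, σ k = 1 ∨ σ k = -1) (k : ℕ) :
    ‖(PQ σ k).1.eval 1‖ ^ 2 + ‖(PQ σ k).2.eval 1‖ ^ 2 = 2 ^ (k + 1) := by
  induction k with
  | zero => norm_num [PQ]
  | succ k ih =>
    have hτ : ‖(σ k : ℂ) * (PQ σ k).2.eval 1‖ = ‖(PQ σ k).2.eval 1‖ := by
      rcases hσ k with h | h <;> simp [h]
    have := parallelogram_law_with_norm ℝ ((PQ σ k).1.eval 1) ((σ k : ℂ) * (PQ σ k).2.eval 1)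
    simp only [PQ, eval_add, eval_sub, eval_mul, eval_pow, eval_X, eval_C, one_pow, mul_one]
    rw [hτ] at this
    rw [this, pow_succ _ (k + 1), ← ih]
    ring

theorem norm_coeffPartialSum_PQ_le (hσ : ∀ k, σ k = 1 ∨ σ k = -1) (k : ℕ) :
    ∀ N ≤ 2 ^ k, ‖coeffPartialSum (PQ σ k).1 N‖ ≤ (2 + √2) * √N ∧
      ‖coeffPartialSum (PQ σ k).2 N‖ ≤ (2 + √2) * √N := by
  induction k with
  | zero =>
    intro N hN
    interval_cases N <;> norm_num [PQ, coeffPartialSum, sum_range_succ]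
    linarith [Real.sqrt_nonneg 2]
  | succ k ih =>
    have hτ : ‖(σ k : ℂ)‖ = 1 := by rcases hσ k with h | h <;> simp [h]
    have hp1 : ‖(PQ σ k).1.eval 1‖ ^ 2 ≤ 2 * (2 ^ k : ℕ) := by
      have := norm_eval_one_PQ_sq hσ k
      rw [pow_succ' (2 : ℝ)] at this
      push_cast
      nlinarith [sq_nonneg ‖(PQ σ k).2.eval 1‖]
    intro N hN
    rw [pow_succ'] at hN
    rw [PQ_snd_succ]
    exact ⟨norm_coeffPartialSum_add_C_mul_X_pow_mul_le hτ (natDegree_PQ_le σ k).1 hp1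
        (fun n hn => (ih n hn).1) (fun n hn => (ih n hn).2) hN,
      norm_coeffPartialSum_add_C_mul_X_pow_mul_le (by rwa [norm_neg]) (natDegree_PQ_le σ k).1 hp1
        (fun n hn => (ih n hn).1) (fun n hn => (ih n hn).2) hN⟩

end PQ

/-- Whatever the choice of the signs `σ_k`, the coefficient sequence `ε` is balanced:
`|∑_{n=1}^N ε_n| ≤ 2(1+√2)√N`, and hence the averages `(1/N)∑_{n=1}^N ε_n` tend to `0`. -/
theorem stmt5 (σ : ℕ → ℤ) (hσ : ∀ k, σ k = 1 ∨ σ k = -1) (ε : ℕ → ℂ)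
    (hε : ∀ n k : ℕ, 1 ≤ n → n ≤ 2 ^ k → ε n = (PQ σ k).1.coeff n) :
    (∀ N : ℕ, 1 ≤ N →
      ‖∑ n ∈ Finset.Icc 1 N, ε n‖ ≤ 2 * (1 + Real.sqrt 2) * Real.sqrt N) ∧
    Tendsto (fun N : ℕ => (1 / (N : ℂ)) * ∑ n ∈ Finset.Icc 1 N, ε n)
      atTop (nhds 0) := by
  have hbound : ∀ N : ℕ, 1 ≤ N →
      ‖∑ n ∈ Finset.Icc 1 N, ε n‖ ≤ 2 * (1 + Real.sqrt 2) * Real.sqrt N := by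
    intro N _
    have hN : N ≤ 2 ^ N := Nat.lt_two_pow_self.le
    have hsum : ∑ n ∈ Icc 1 N, ε n = coeffPartialSum (PQ σ N).1 N := by
      rw [coeffPartialSum_eq_sum_Icc (X_dvd_iff.mp (X_dvd_PQ σ N).1)]
      exact sum_congr rfl fun n hn => hε n N (mem_Icc.mp hn).1 ((mem_Icc.mp hn).2.trans hN)
    rw [hsum]
    refine (norm_coeffPartialSum_PQ_le hσ N N hN).1.trans ?_
    gcongr
    linarith [Real.sqrt_nonneg 2]
  exact ⟨hbound, tendsto_one_div_mul_of_norm_le_mul_sqrt hbound⟩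
end

section
/- For every k ∈ ℕ₀, the word a_k = ε_1 ε_2 ⋯ ε_{2^k} ∈ {±1}^{2^k} of coefficients of P_k satisfies a_k = φ((S_{σ_0} ∘ S_{σ_1} ∘ ⋯ ∘ S_{σ_{k−1}})(A)), where S_σ denotes S₊ if σ = 1 and S₋ if σ = −1. -/
open Polynomial

/-- The four-letter alphabet `{A, B, Ā, B̄}`. -/
inductive Letter : Type
  | A | B | Abar | Bbar
  deriving DecidableEq, Repr

/-- The substitution `S₊ : A ↦ AB, B ↦ AB̄, Ā ↦ ĀB̄, B̄ ↦ ĀB`. -/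
def Splus : Letter → List Letter
  | .A => [.A, .B]
  | .B => [.A, .Bbar]
  | .Abar => [.Abar, .Bbar]
  | .Bbar => [.Abar, .B]

/-- The substitution `S₋ : A ↦ AB̄, B ↦ AB, Ā ↦ ĀB, B̄ ↦ ĀB̄`. -/
def Sminus : Letter → List Letter
  | .A => [.A, .Bbar]
  | .B => [.A, .B]
  | .Abar => [.Abar, .B]
  | .Bbar => [.Abar, .Bbar]

/-- `S_σ` is `S₊` if `σ = 1` and `S₋` otherwise (in particular if `σ = -1`). -/
def Ssign (s : ℤ) : Letter → List Letter :=
  if s = 1 then Splus else Sminus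

/-- `comp σ k u = (S_{σ_0} ∘ S_{σ_1} ∘ ⋯ ∘ S_{σ_{k-1}})(u)`. -/
def comp (σ : ℕ → ℤ) : ℕ → List Letter → List Letter
  | 0, u => u
  | k + 1, u => comp σ k (u.flatMap (Ssign (σ k)))

/-- The factor map `φ : A, B ↦ 1`, `Ā, B̄ ↦ -1`. -/
def phi : Letter → ℂ
  | .A => 1
  | .B => 1
  | .Abar => -1
  | .Bbar => -1

/-! Encode a word `w₀ ⋯ w_{n-1}` over `𝒜` by the polynomial `Σ φ(wᵢ) X^{i+1}`, so that concatenation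
becomes `f(uv) = f(u) + X^{|u|} f(v)`. Writing `S_{σ_k}(ℓ) = ℓ₁ℓ₂`, the word
`(S_{σ_0} ∘ ⋯ ∘ S_{σ_k})(ℓ)` is the concatenation of the images of `ℓ₁` and `ℓ₂` under
`S_{σ_0} ∘ ⋯ ∘ S_{σ_{k-1}}`, both of length `2^k`. Hence, by induction on `k`, the images of
`A, B, Ā, B̄` are encoded by `P_k, Q_k, -P_k, -Q_k`: the substitution rules are exactly the
recurrence `P_k ± σ_k X^{2^k} Q_k`. -/

namespace Polynomial

variable {R : Type*} [Semiring R]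

noncomputable def ofList : List R → R[X]
  | [] => 0
  | a :: w => C a + X * ofList w

@[simp]
lemma ofList_nil : ofList ([] : List R) = 0 := rfl

@[simp]
lemma ofList_cons (a : R) (w : List R) : ofList (a :: w) = C a + X * ofList w := rfl

lemma ofList_append (u v : List R) : ofList (u ++ v) = ofList u + X ^ u.length * ofList v := by
  induction u with
  | nil => simp
  | cons a u ih =>
    simp only [List.cons_append, ofList_cons, ih, List.length_cons, pow_succ']
    noncomm_ring

lemma coeff_ofList (w : List R) (i : ℕ) : (ofList w).coeff i = w.getD i 0 := by
  induction w generalizing i with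
  | nil => simp
  | cons a w ih => cases i <;> simp [coeff_C, ih]

lemma map_range_coeff_ofList (w : List R) : (List.range w.length).map (ofList w).coeff = w := by
  apply List.ext_getElem (by simp)
  intro i _ hi
  simp [coeff_ofList, List.getElem?_eq_getElem hi]

end Polynomial

lemma length_Ssign (s : ℤ) (l : Letter) : (Ssign s l).length = 2 := by
  unfold Ssign
  split <;> cases l <;> rfl

section Substitution

variable (σ : ℕ → ℤ)

lemma comp_append (k : ℕ) (u v : List Letter) : comp σ k (u ++ v) = comp σ k u ++ comp σ k v := by
  induction k generalizing u v with
  | zero => rfl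
  | succ k ih => simp only [_root_.comp, List.flatMap_append, ih]

lemma comp_succ_singleton (k : ℕ) (l : Letter) : comp σ (k + 1) [l] = comp σ k (Ssign (σ k) l) := by
  simp [_root_.comp]

lemma length_comp (k : ℕ) (u : List Letter) : (comp σ k u).length = 2 ^ k * u.length := by
  induction k generalizing u with
  | zero => simp [_root_.comp]
  | succ k ih =>
    simp only [_root_.comp, ih, List.length_flatMap, length_Ssign, List.map_const',
      List.sum_replicate, smul_eq_mul]
    ring

noncomputable def codingPoly (w : List Letter) : ℂ[X] := X * ofList (w.map phi)

lemma codingPoly_append (u v : List Letter) :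
    codingPoly (u ++ v) = codingPoly u + X ^ u.length * codingPoly v := by
  simp only [codingPoly, List.map_append, ofList_append, List.length_map]
  ring

lemma codingPoly_comp_pair (k : ℕ) (l₁ l₂ : Letter) :
    codingPoly (comp σ k [l₁, l₂])
      = codingPoly (comp σ k [l₁]) + X ^ 2 ^ k * codingPoly (comp σ k [l₂]) := by
  rw [show [l₁, l₂] = [l₁] ++ [l₂] from rfl, comp_append, codingPoly_append, length_comp,
    List.length_singleton, mul_one]

noncomputable def letterPoly (k : ℕ) : Letter → ℂ[X]
  | .A => (PQ σ k).1
  | .B => (PQ σ k).2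
  | .Abar => -(PQ σ k).1
  | .Bbar => -(PQ σ k).2

variable {σ}

lemma letterPoly_succ {k : ℕ} (hσ : σ k = 1 ∨ σ k = -1) {l l₁ l₂ : Letter}
    (h : Ssign (σ k) l = [l₁, l₂]) :
    letterPoly σ (k + 1) l = letterPoly σ k l₁ + X ^ 2 ^ k * letterPoly σ k l₂ := by
  rcases hσ with hs | hs <;> cases l <;>
    simp only [Ssign, hs, Splus, Sminus, List.cons.injEq, and_true, if_true, reduceCtorEq,
      if_false] at h <;>
    obtain ⟨rfl, rfl⟩ := h <;>
    simp [letterPoly, PQ, hs] <;> ring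

lemma codingPoly_comp_singleton (hσ : ∀ k, σ k = 1 ∨ σ k = -1) (k : ℕ) (l : Letter) :
    codingPoly (comp σ k [l]) = letterPoly σ k l := by
  induction k generalizing l with
  | zero => cases l <;> simp [codingPoly, _root_.comp, phi, letterPoly, PQ]
  | succ k ih =>
    obtain ⟨l₁, l₂, h⟩ := List.length_eq_two.mp (length_Ssign (σ k) l)
    rw [comp_succ_singleton, h, codingPoly_comp_pair, ih, ih, letterPoly_succ (hσ k) h]

end Substitution

/-- The word `a_k = ε_1 ⋯ ε_{2^k}` of coefficients of `P_k` equals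
`φ((S_{σ_0} ∘ ⋯ ∘ S_{σ_{k-1}})(A))` (letterwise). -/
theorem stmt8 (σ : ℕ → ℤ) (hσ : ∀ k, σ k = 1 ∨ σ k = -1) :
    ∀ k : ℕ,
      (comp σ k [Letter.A]).map phi
        = (List.range (2 ^ k)).map (fun i => (PQ σ k).1.coeff (i + 1)) := by
  intro k
  have hP : X * ofList ((comp σ k [Letter.A]).map phi) = (PQ σ k).1 :=
    codingPoly_comp_singleton hσ k .A
  have hlen : ((comp σ k [Letter.A]).map phi).length = 2 ^ k := by
    simp [length_comp]
  simp only [← hP, coeff_X_mul]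
  rw [← hlen]
  exact (map_range_coeff_ofList _).symm
end

section
/- Let w₋₊, w₊₋ : ℕ → 𝒜 satisfy w₋₊(0) = w₊₋(0) = A, S₋₊·w₋₊ = w₋₊ and S₊₋·w₊₋ = w₊₋. Equip 𝒜^ℕ with the product topology (𝒜 discrete), and let X₋₊ and X₊₋ be the closures of the orbits {Tⁿ w₋₊ : n ∈ ℕ} and {Tⁿ w₊₋ : n ∈ ℕ} under the shift T. Then X₊₋ = S₊·X₋₊ ∪ T(S₊·X₋₊) and X₋₊ = S₋·X₊₋ ∪ T(S₋·X₊₋), where S₊·X (resp. S₋·X) denotes the image of X under the action of S₊ (resp. S₋) on sequences. -/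
instance : TopologicalSpace Letter := ⊥
instance : DiscreteTopology Letter := ⟨rfl⟩

/-- The substitution `S₋₊ : A ↦ AB̄AB, B ↦ AB̄ĀB̄, Ā ↦ ĀBĀB̄, B̄ ↦ ĀBAB`. -/
def Sminusplus : Letter → List Letter
  | .A => [.A, .Bbar, .A, .B]
  | .B => [.A, .Bbar, .Abar, .Bbar]
  | .Abar => [.Abar, .B, .Abar, .Bbar]
  | .Bbar => [.Abar, .B, .A, .B]

/-- The substitution `S₊₋ : A ↦ ABĀB, B ↦ ABAB̄, Ā ↦ ĀB̄AB̄, B̄ ↦ ĀB̄ĀB`. -/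
def Splusminus : Letter → List Letter
  | .A => [.A, .B, .Abar, .B]
  | .B => [.A, .B, .A, .Bbar]
  | .Abar => [.Abar, .Bbar, .A, .Bbar]
  | .Bbar => [.Abar, .Bbar, .Abar, .B]

/-- The action of a constant-length-`L` substitution `S` on one-sided infinite
sequences: `(S·w)(Ln + r)` is the `r`-th letter of `S(w(n))` for `0 ≤ r < L`. -/
def act (L : ℕ) (S : Letter → List Letter) (w : ℕ → Letter) : ℕ → Letter :=
  fun m => (S (w (m / L))).getD (m % L) Letter.A

/-- The shift map `T` on one-sided infinite sequences. -/
def shift (w : ℕ → Letter) : ℕ → Letter := fun n => w (n + 1)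

/-!
`S₊` intertwines the two length-four substitutions: `S₊₋ ∘ S₊ = S₊ ∘ S₋₊` letter by letter, so
`S₊·w₋₊` is a fixed point of `S₊₋` beginning with `A`. A fixed point of a substitution of length
at least two is determined by its first letter, hence `S₊·w₋₊ = w₊₋`. Splitting the shift orbit
of `S₊·w₋₊` by parity gives `S₊` of the orbit of `w₋₊` together with its shift, and since the
hull is compact and `S₊`, `T` are continuous, taking closures commutes with these images.
The same argument with `S₋` gives the second identity.
-/

instance : Fintype Letter :=
  ⟨{.A, .B, .Abar, .Bbar}, fun a => by cases a <;> decide⟩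

theorem List.getD_flatMap_of_length_eq {α β : Type*} {U : α → List β} {M : ℕ}
    (hU : ∀ a, (U a).length = M) (l : List α) (d : α) (e : β) {s : ℕ}
    (hs : s < l.length * M) :
    (l.flatMap U).getD s e = (U (l.getD (s / M) d)).getD (s % M) e := by
  induction l generalizing s with
  | nil => simp at hs
  | cons a l ih =>
    rw [List.flatMap_cons]
    rcases lt_or_ge s M with hsM | hsM
    · rw [List.getD_append _ _ _ _ (by rwa [hU]), Nat.div_eq_of_lt hsM, Nat.mod_eq_of_lt hsM]
      rfl
    · obtain ⟨t, rfl⟩ := Nat.exists_eq_add_of_le hsM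
      rw [List.length_cons, Nat.add_one_mul] at hs
      have hM : 0 < M := Nat.pos_of_ne_zero (by rintro rfl; simp at hs)
      rw [List.getD_append_right _ _ _ _ (by rw [hU]; omega), hU, Nat.add_sub_cancel_left,
        ih (by omega), Nat.add_div_left _ hM, Nat.add_mod_left]
      rfl

section Substitution

variable {L M : ℕ} {S U V : Letter → List Letter}

theorem shift_iterate_apply (n : ℕ) (w : ℕ → Letter) (k : ℕ) : shift^[n] w k = w (k + n) := by
  induction n generalizing w with
  | zero => rfl
  | succ n ih => rw [Function.iterate_succ_apply, ih, shift, Nat.add_assoc]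

theorem continuous_shift : Continuous shift :=
  continuous_pi fun n => continuous_apply (n + 1)

theorem continuous_act : Continuous (act L S) :=
  continuous_pi fun m =>
    (continuous_of_discreteTopology (f := fun a => (S a).getD (m % L) Letter.A)).comp
      (continuous_apply (m / L))

theorem act_shift_iterate (hL : 0 < L) (n : ℕ) (w : ℕ → Letter) :
    act L S (shift^[n] w) = shift^[L * n] (act L S w) := by
  funext m
  simp only [act, shift_iterate_apply, Nat.add_mul_div_left _ _ hL, Nat.add_mul_mod_self_left]

theorem act_act (hL : 0 < L) (hM : 0 < M) (hS : ∀ a, (S a).length = L)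
    (hU : ∀ a, (U a).length = M) (w : ℕ → Letter) :
    act M U (act L S w) = act (L * M) (fun a => (S a).flatMap U) w := by
  funext m
  have hm : m % (L * M) < (S (w (m / (L * M)))).length * M := by
    rw [hS]; exact Nat.mod_lt _ (Nat.mul_pos hL hM)
  simp only [act]
  rw [List.getD_flatMap_of_length_eq hU _ Letter.A _ hm, Nat.mod_mul_left_mod, mul_comm L M,
    Nat.mod_mul_right_div_self, Nat.div_div_eq_div_mul]

theorem act_comm_of_flatMap_eq (hL : 0 < L) (hM : 0 < M) (hS : ∀ a, (S a).length = L)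
    (hU : ∀ a, (U a).length = M) (hV : ∀ a, (V a).length = M)
    (h : ∀ a, (S a).flatMap U = (V a).flatMap S) (w : ℕ → Letter) :
    act M U (act L S w) = act L S (act M V w) := by
  rw [act_act hL hM hS hU, act_act hM hL hV hS, mul_comm, funext h]

theorem eq_of_act_eq_self (hL : 1 < L) {u v : ℕ → Letter} (hu : act L S u = u)
    (hv : act L S v = v) (h0 : u 0 = v 0) : u = v := by
  funext m
  induction m using Nat.strong_induction_on with
  | _ m ih =>
    rcases Nat.eq_zero_or_pos m with rfl | hm
    · exact h0
    · rw [← hu, ← hv]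
      simp only [act]
      rw [ih _ (Nat.div_lt_self hm hL)]

end Substitution

def hull (w : ℕ → Letter) : Set (ℕ → Letter) := closure {v | ∃ n : ℕ, v = shift^[n] w}

theorem hull_eq_biUnion {L : ℕ} {S : Letter → List Letter} {w u : ℕ → Letter} (hL : 0 < L)
    (hu : act L S w = u) : hull u = ⋃ r < L, shift^[r] '' (act L S '' hull w) := by
  have hcont (r : ℕ) : Continuous (shift^[r] ∘ act L S) :=
    (continuous_shift.iterate r).comp continuous_act
  simp only [Set.image_image]
  apply Set.Subset.antisymm
  · refine closure_minimal ?_ ((Set.finite_lt_nat L).isClosed_biUnion fun r _ =>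
      (isClosed_closure.isCompact.image (hcont r)).isClosed)
    rintro v ⟨n, rfl⟩
    refine Set.mem_biUnion (Nat.mod_lt n hL) ⟨shift^[n / L] w, subset_closure ⟨n / L, rfl⟩, ?_⟩
    dsimp only
    rw [act_shift_iterate hL, hu, ← Function.iterate_add_apply, Nat.mod_add_div]
  · refine Set.iUnion₂_subset fun r _ => ?_
    refine (image_closure_subset_closure_image (hcont r)).trans (closure_mono ?_)
    rintro v ⟨x, ⟨n, rfl⟩, rfl⟩
    refine ⟨r + L * n, ?_⟩
    rw [Function.comp_apply, act_shift_iterate hL, hu, ← Function.iterate_add_apply]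

theorem hull_eq_union {S : Letter → List Letter} {w u : ℕ → Letter} (hu : act 2 S w = u) :
    hull u = act 2 S '' hull w ∪ shift '' (act 2 S '' hull w) := by
  rw [hull_eq_biUnion two_pos hu, show (2 : ℕ) = 0 + 1 + 1 from rfl, Set.biUnion_lt_succ,
    Set.biUnion_lt_succ]
  simp

theorem length_Splus (a : Letter) : (Splus a).length = 2 := by cases a <;> rfl
theorem length_Sminus (a : Letter) : (Sminus a).length = 2 := by cases a <;> rfl
theorem length_Sminusplus (a : Letter) : (Sminusplus a).length = 4 := by cases a <;> rfl
theorem length_Splusminus (a : Letter) : (Splusminus a).length = 4 := by cases a <;> rfl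

theorem Splus_flatMap_Splusminus (a : Letter) :
    (Splus a).flatMap Splusminus = (Sminusplus a).flatMap Splus := by cases a <;> rfl

theorem Sminus_flatMap_Sminusplus (a : Letter) :
    (Sminus a).flatMap Sminusplus = (Splusminus a).flatMap Sminus := by cases a <;> rfl

/-- The hulls of the fixed points of `S₋₊` and `S₊₋` satisfy
`X₊₋ = S₊·X₋₊ ∪ T(S₊·X₋₊)` and `X₋₊ = S₋·X₊₋ ∪ T(S₋·X₊₋)`. -/
theorem stmt12 (wmp wpm : ℕ → Letter)
    (h1 : wmp 0 = Letter.A) (h2 : wpm 0 = Letter.A)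
    (h3 : act 4 Sminusplus wmp = wmp) (h4 : act 4 Splusminus wpm = wpm)
    (Xmp Xpm : Set (ℕ → Letter))
    (hXmp : Xmp = closure {v | ∃ n : ℕ, v = shift^[n] wmp})
    (hXpm : Xpm = closure {v | ∃ n : ℕ, v = shift^[n] wpm}) :
    Xpm = (act 2 Splus) '' Xmp ∪ shift '' ((act 2 Splus) '' Xmp) ∧
    Xmp = (act 2 Sminus) '' Xpm ∪ shift '' ((act 2 Sminus) '' Xpm) := by
  have hpm : act 2 Splus wmp = wpm := by
    refine eq_of_act_eq_self (S := Splusminus) (by norm_num) ?_ h4 (by simp [act, h1, h2, Splus])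
    rw [act_comm_of_flatMap_eq two_pos four_pos length_Splus length_Splusminus
      length_Sminusplus Splus_flatMap_Splusminus, h3]
  have hmp : act 2 Sminus wpm = wmp := by
    refine eq_of_act_eq_self (S := Sminusplus) (by norm_num) ?_ h3 (by simp [act, h1, h2, Sminus])
    rw [act_comm_of_flatMap_eq two_pos four_pos length_Sminus length_Sminusplus
      length_Splusminus Sminus_flatMap_Sminusplus, h4]
  subst hXmp hXpm
  exact ⟨hull_eq_union hpm, hull_eq_union hmp⟩
end

section
/- For every finite sequence of signs σ_0, …, σ_{k−1} ∈ {1, −1} and every letter a ∈ 𝒜, the word ABAB is not a contiguous subword of (S_{σ_0} ∘ S_{σ_1} ∘ ⋯ ∘ S_{σ_{k−1}})(a), where S_σ denotes S₊ if σ = 1 and S₋ if σ = −1. -/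
/-!
Every `S_σ` sends a letter to a pair `xy` with `x ∈ {A, Ā}` and `y ∈ {B, B̄}`, so in an image
`S_σ(w)` the letters alternate between `{A, Ā}` and `{B, B̄}`; in particular no letter is repeated.
An occurrence of `ABAB` in `S_σ(w)` starts with `A`, hence at an even position, so it is the
image `S_σ(x) S_σ(y)` of two consecutive letters of `w` with `S_σ(x) = S_σ(y) = AB`. As `S_σ` is
injective, `x = y`, a repeated letter. So "no repeated letter and no `ABAB`" holds for a single
letter and is preserved by every `S_σ`.
-/

namespace Letter

def IsB : Letter → Prop
  | .B | .Bbar => True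
  | .A | .Abar => False

end Letter

def IsABPairSubst (f : Letter → List Letter) : Prop :=
  ∀ x, ∃ c d, f x = [c, d] ∧ ¬ c.IsB ∧ d.IsB

theorem isABPairSubst_Ssign (s : ℤ) : IsABPairSubst (Ssign s) := by
  unfold Ssign; split <;> intro x <;> cases x <;> simp [Splus, Sminus, Letter.IsB]

theorem Ssign_injective (s : ℤ) : (Ssign s).Injective := by
  unfold Ssign; split <;> intro x y <;> cases x <;> cases y <;> simp [Splus, Sminus]

namespace IsABPairSubst

variable {f : Letter → List Letter}

theorem not_isB_of_mem_head?_flatMap (hf : IsABPairSubst f) {w : List Letter}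
    {z : Letter} (hz : z ∈ (w.flatMap f).head?) : ¬ z.IsB := by
  cases w with
  | nil => simp at hz
  | cons x w =>
    obtain ⟨c, d, hx, hc, -⟩ := hf x
    simp_all

theorem isChain_isB_ne_flatMap (hf : IsABPairSubst f) (w : List Letter) :
    (w.flatMap f).IsChain (fun x y => x.IsB ≠ y.IsB) := by
  induction w with
  | nil => exact .nil
  | cons x w ih =>
    obtain ⟨c, d, hx, hc, hd⟩ := hf x
    rw [List.flatMap_cons, hx, List.isChain_append]
    refine ⟨by simp [hc, hd], ih, ?_⟩
    intro d' hd' z hz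
    simp only [List.getLast?_cons_cons, List.getLast?_singleton, Option.mem_some_iff] at hd'
    simp [← hd', hd, hf.not_isB_of_mem_head?_flatMap hz]

theorem isChain_ne_flatMap (hf : IsABPairSubst f) (w : List Letter) :
    (w.flatMap f).IsChain (· ≠ ·) :=
  (hf.isChain_isB_ne_flatMap w).imp fun _ _ h hxy => h (hxy ▸ rfl)

theorem not_infix_flatMap (hf : IsABPairSubst f) (hinj : f.Injective) {c d : Letter}
    (hc : ¬ c.IsB) {w : List Letter} (hw : w.IsChain (· ≠ ·)) :
    ¬ [c, d, c, d] <:+: w.flatMap f := by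
  induction w with
  | nil => simp
  | cons x w ih =>
    obtain ⟨c', d', hx, -, hd'⟩ := hf x
    rw [List.flatMap_cons, hx, List.cons_append, List.infix_cons_iff, List.cons_append,
      List.infix_cons_iff, not_or, not_or]
    refine ⟨?aligned, ?shifted, ih hw.tail⟩
    case shifted =>
      rw [List.cons_prefix_cons]
      rintro ⟨rfl, -⟩
      exact hc hd'
    case aligned =>
      cases w with
      | nil => simp
      | cons y w =>
        obtain ⟨c'', d'', hy, -⟩ := hf y
        rw [List.flatMap_cons, hy]
        simp only [List.cons_append, List.nil_append, List.cons_prefix_cons, List.nil_prefix,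
          and_true]
        rintro ⟨rfl, rfl, rfl, rfl⟩
        exact List.rel_of_isChain_cons_cons hw (hinj (hx.trans hy.symm))

end IsABPairSubst

theorem comp_induction (P : List Letter → Prop) (σ : ℕ → ℤ)
    (hP : ∀ s w, P w → P (w.flatMap (Ssign s))) (k : ℕ) {u : List Letter} (hu : P u) :
    P (comp σ k u) := by
  induction k generalizing u with
  | zero => exact hu
  | succ k ih => exact ih (hP _ _ hu)

theorem stmt13_general (σ : ℕ → ℤ) (k : ℕ) (a : Letter) :
    ¬ ([Letter.A, Letter.B, Letter.A, Letter.B] <:+: comp σ k [a]) := by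
  refine (comp_induction (fun w => w.IsChain (· ≠ ·) ∧ ¬ [.A, .B, .A, .B] <:+: w) σ ?_ k
    ⟨List.isChain_singleton a, fun h => by simpa using h.length_le⟩).2
  rintro s w ⟨hw, -⟩
  exact ⟨(isABPairSubst_Ssign s).isChain_ne_flatMap w,
    (isABPairSubst_Ssign s).not_infix_flatMap (Ssign_injective s) (by simp [Letter.IsB]) hw⟩

/-- The word `ABAB` is never a contiguous subword of
`(S_{σ_0} ∘ ⋯ ∘ S_{σ_{k-1}})(a)`, for any signs `σ_i ∈ {1, -1}` and any letter `a`. -/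
theorem stmt13 (σ : ℕ → ℤ) (hσ : ∀ k, σ k = 1 ∨ σ k = -1) (k : ℕ) (a : Letter) :
    ¬ ([Letter.A, Letter.B, Letter.A, Letter.B] <:+: comp σ k [a]) :=
  stmt13_general σ k a
end
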